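/- Let φ : ℝ → ℝ be three times continuously differentiable with |φ'''(x)| ≤ K3 for all x, and let β > 0, μ0, δr ∈ ℝ be such that the hybrid h is a well-defined probability measure with finite mean μ_h and finite variance v_h > 0, φ' is h-integrable, and the unnormalized density tends to 0 at ±∞. Then the site parameters r_site := μ_h/v_h − (β μ0 − δr) and β_site := v_h⁻¹ − β satisfy |r_site − β_site·μ0 + φ'(μ0) − (β_site − φ''(μ0))·(μ_h − μ0)| ≤ (K3/2)·(v_h + (μ_h − μ0)²). -/

import Mathlib

open MeasureTheory Real Filter

noncomputable section

/-- Unnormalized density of the hybrid distribution: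
`l(x) · exp(−(β/2)x² + (β μ0 − δr)x)` with `l = exp (−φ)`. -/
def hybridDens (φ : ℝ → ℝ) (β μ0 δr : ℝ) (x : ℝ) : ℝ :=
  Real.exp (-(φ x) - β / 2 * x ^ 2 + (β * μ0 - δr) * x)

/-- The hybrid distribution: the normalized measure with density
proportional to `hybridDens`. -/
def hybrid (φ : ℝ → ℝ) (β μ0 δr : ℝ) : Measure ℝ :=
  ((volume.withDensity fun x => ENNReal.ofReal (hybridDens φ β μ0 δr x)) Set.univ)⁻¹ •
    (volume.withDensity fun x => ENNReal.ofReal (hybridDens φ β μ0 δr x))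

/-- Mean of the hybrid distribution. -/
def hybridMean (φ : ℝ → ℝ) (β μ0 δr : ℝ) : ℝ :=
  ∫ x, x ∂(hybrid φ β μ0 δr)

/-- Variance of the hybrid distribution. -/
def hybridVar (φ : ℝ → ℝ) (β μ0 δr : ℝ) : ℝ :=
  ∫ x, (x - hybridMean φ β μ0 δr) ^ 2 ∂(hybrid φ β μ0 δr)

/-!
Integrating the derivative of the unnormalized density over `ℝ` gives the Stein identity
`E_h[φ'] = β μ0 - δr - β μ_h`. Substituting it, the `v_h⁻¹` terms cancel and the quantity in the
absolute value becomes `-E_h[φ'(x) - φ'(μ0) - φ''(μ0)(x - μ0)]`. By Taylor's theorem the integrand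
is bounded by `(K3/2)(x - μ0)²`, whose `h`-mean is `(K3/2)(v_h + (μ_h - μ0)²)`.
-/

open Set Topology

theorem abs_sub_sub_deriv_mul_le_of_abs_iteratedDeriv_two_le {f : ℝ → ℝ} {K : ℝ}
    (hf : ContDiff ℝ 2 f) (hK : ∀ x, |iteratedDeriv 2 f x| ≤ K) (a x : ℝ) :
    |f x - f a - deriv f a * (x - a)| ≤ K / 2 * (x - a) ^ 2 := by
  rcases eq_or_ne a x with rfl | hax
  · simp
  obtain ⟨c, -, hc⟩ := taylor_mean_remainder_lagrange_iteratedDeriv (n := 1) hax hf.contDiffOn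
  have htaylor : taylorWithinEval f 1 (uIcc a x) a x = f a + deriv f a * (x - a) := by
    rw [taylorWithinEval_succ, taylor_within_zero_eval, iteratedDerivWithin_one,
      (hf.differentiable (by norm_num) a).derivWithin (uniqueDiffOn_uIcc hax a left_mem_uIcc)]
    simp [mul_comm]
  rw [sub_sub, ← htaylor, hc]
  simp only [Nat.reduceAdd, Nat.factorial_two, Nat.cast_ofNat]
  rw [abs_div, abs_mul, abs_of_nonneg (sq_nonneg (x - a)), abs_two]
  nlinarith [hK c, sq_nonneg (x - a)]

theorem integral_deriv_withDensity_exp_eq_zero {W : ℝ → ℝ} (hW : Differentiable ℝ W)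
    (hint : Integrable (deriv W) (volume.withDensity fun x => ENNReal.ofReal (exp (W x))))
    (hbot : Tendsto (fun x => exp (W x)) atBot (𝓝 0))
    (htop : Tendsto (fun x => exp (W x)) atTop (𝓝 0)) :
    ∫ x, deriv W x ∂(volume.withDensity fun x => ENNReal.ofReal (exp (W x))) = 0 := by
  have hmeas : Measurable fun x => ENNReal.ofReal (exp (W x)) :=
    hW.continuous.rexp.measurable.ennreal_ofReal
  have hfin : ∀ᵐ x, ENNReal.ofReal (exp (W x)) < ⊤ := ae_of_all _ fun _ => ENNReal.ofReal_lt_top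
  rw [integrable_withDensity_iff_integrable_smul' hmeas hfin] at hint
  rw [integral_withDensity_eq_integral_toReal_smul hmeas hfin]
  simp only [ENNReal.toReal_ofReal (exp_pos _).le, smul_eq_mul] at hint ⊢
  simpa using integral_of_hasDerivAt_of_tendsto (fun x => (hW x).hasDerivAt.exp) hint hbot htop

theorem integrable_of_integrable_inv_measure_univ_smul {α : Type*} [MeasurableSpace α]
    {ν : Measure α} (hν : IsProbabilityMeasure ((ν univ)⁻¹ • ν)) {f : α → ℝ}
    (hf : Integrable f ((ν univ)⁻¹ • ν)) : Integrable f ν := by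
  have hmass : (ν univ)⁻¹ * ν univ = 1 := by
    have := hν.measure_univ
    rwa [Measure.smul_apply, smul_eq_mul] at this
  have hne_zero : ν univ ≠ 0 := by rintro h; simp [h] at hmass
  have hne_top : ν univ ≠ ⊤ := by rintro h; simp [h] at hmass
  exact (integrable_smul_measure (ENNReal.inv_ne_zero.2 hne_top)
    (ENNReal.inv_ne_top.2 hne_zero)).1 hf

theorem integral_deriv_hybrid_eq {φ : ℝ → ℝ} (hφ : Differentiable ℝ φ) {β μ0 δr : ℝ}
    (hprob : IsProbabilityMeasure (hybrid φ β μ0 δr))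
    (hmean : Integrable (fun x => x) (hybrid φ β μ0 δr))
    (hd : Integrable (deriv φ) (hybrid φ β μ0 δr))
    (hbot : Tendsto (hybridDens φ β μ0 δr) atBot (𝓝 0))
    (htop : Tendsto (hybridDens φ β μ0 δr) atTop (𝓝 0)) :
    ∫ x, deriv φ x ∂hybrid φ β μ0 δr = β * μ0 - δr - β * hybridMean φ β μ0 δr := by
  set W : ℝ → ℝ := fun x => -(φ x) - β / 2 * x ^ 2 + (β * μ0 - δr) * x
  have hW (x : ℝ) : HasDerivAt W (-deriv φ x - β * x + (β * μ0 - δr)) x :=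
    ((((hφ x).hasDerivAt.neg).sub ((hasDerivAt_pow 2 x).const_mul (β / 2))).add
      ((hasDerivAt_id x).const_mul (β * μ0 - δr))).congr_deriv (by norm_num; ring)
  have hWd : deriv W = fun x => -deriv φ x - β * x + (β * μ0 - δr) :=
    funext fun x => (hW x).deriv
  have hlin : Integrable (fun x => -deriv φ x - β * x) (hybrid φ β μ0 δr) :=
    hd.fun_neg.sub' (hmean.const_mul β)
  have hint : Integrable (deriv W) (hybrid φ β μ0 δr) := by
    rw [hWd]
    exact hlin.fun_add (integrable_const _)
  have hzero : ∫ x, deriv W x ∂hybrid φ β μ0 δr = 0 := by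
    have hdens : (fun x => ENNReal.ofReal (hybridDens φ β μ0 δr x)) =
        fun x => ENNReal.ofReal (exp (W x)) := rfl
    rw [hybrid, integral_smul_measure, hdens,
      integral_deriv_withDensity_exp_eq_zero (fun x => (hW x).differentiableAt)
        (integrable_of_integrable_inv_measure_univ_smul hprob hint) hbot htop, smul_zero]
  simp only [hWd] at hzero
  rw [integral_add hlin (integrable_const _),
    integral_sub hd.fun_neg (hmean.const_mul β),
    integral_neg, integral_const_mul,
    integral_const, probReal_univ] at hzero
  simp only [one_smul] at hzero
  rw [hybridMean]
  linarith

section SecondMoment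

variable {μ : Measure ℝ}

theorem integrable_sub_sq [IsFiniteMeasure μ] (h1 : Integrable (fun x => x) μ)
    (h2 : Integrable (fun x => x ^ 2) μ) (a : ℝ) : Integrable (fun x => (x - a) ^ 2) μ :=
  ((h2.sub (h1.const_mul (2 * a))).add (integrable_const (a ^ 2))).congr
    (ae_of_all _ fun x => by simp only [Pi.add_apply, Pi.sub_apply]; ring)

theorem integral_sub_sq [IsProbabilityMeasure μ] (h1 : Integrable (fun x => x) μ)
    (h2 : Integrable (fun x => x ^ 2) μ) (a : ℝ) :
    ∫ x, (x - a) ^ 2 ∂μ = ∫ x, x ^ 2 ∂μ - 2 * a * ∫ x, x ∂μ + a ^ 2 := by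
  have hlin : Integrable (fun x => 2 * a * x) μ := h1.const_mul _
  calc ∫ x, (x - a) ^ 2 ∂μ = ∫ x, x ^ 2 - 2 * a * x + a ^ 2 ∂μ :=
        integral_congr_ae (ae_of_all _ fun x => by ring)
    _ = ∫ x, x ^ 2 ∂μ - 2 * a * ∫ x, x ∂μ + a ^ 2 := by
        rw [integral_add (h2.sub' hlin) (integrable_const _), integral_sub h2 hlin,
          integral_const_mul, integral_const, probReal_univ, one_smul]

theorem integral_sub_sq_eq_integral_sub_integral_sq_add [IsProbabilityMeasure μ]
    (h1 : Integrable (fun x => x) μ) (h2 : Integrable (fun x => x ^ 2) μ) (a : ℝ) :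
    ∫ x, (x - a) ^ 2 ∂μ = ∫ x, (x - ∫ y, y ∂μ) ^ 2 ∂μ + (∫ y, y ∂μ - a) ^ 2 := by
  rw [integral_sub_sq h1 h2, integral_sub_sq h1 h2]
  ring

theorem abs_integral_sub_sub_mul_le [IsProbabilityMeasure μ] {f : ℝ → ℝ} {a b C : ℝ}
    (hf : Integrable f μ) (h1 : Integrable (fun x => x) μ)
    (h2 : Integrable (fun x => (x - a) ^ 2) μ)
    (hfa : ∀ x, |f x - f a - b * (x - a)| ≤ C * (x - a) ^ 2) :
    |∫ x, f x ∂μ - f a - b * (∫ x, x ∂μ - a)| ≤ C * ∫ x, (x - a) ^ 2 ∂μ := by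
  have hlin : Integrable (fun x => b * (x - a)) μ :=
    (h1.sub (integrable_const a)).const_mul b
  have hremainder : ∫ x, f x ∂μ - f a - b * (∫ x, x ∂μ - a)
      = ∫ x, f x - f a - b * (x - a) ∂μ := by
    rw [integral_sub (hf.sub' (integrable_const _)) hlin, integral_sub hf (integrable_const _),
      integral_const_mul, integral_sub h1 (integrable_const _)]
    simp
  rw [hremainder, ← integral_const_mul, ← Real.norm_eq_abs]
  exact norm_integral_le_of_norm_le (h2.const_mul C) (ae_of_all _ hfa)

end SecondMoment

theorem site_linear_shift_taylor_bound_general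
    (φ : ℝ → ℝ) (K3 : ℝ) (hφ : ContDiff ℝ 3 φ)
    (hK3 : ∀ x, |iteratedDeriv 3 φ x| ≤ K3)
    (β μ0 δr : ℝ)
    (hprob : IsProbabilityMeasure (hybrid φ β μ0 δr))
    (hmean : Integrable (fun x => x) (hybrid φ β μ0 δr))
    (hm2 : Integrable (fun x => x ^ 2) (hybrid φ β μ0 δr))
    (hd : Integrable (fun x => deriv φ x) (hybrid φ β μ0 δr))
    (htop : Tendsto (fun x => hybridDens φ β μ0 δr x) atTop (nhds 0))
    (hbot : Tendsto (fun x => hybridDens φ β μ0 δr x) atBot (nhds 0)) :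
    |(hybridMean φ β μ0 δr / hybridVar φ β μ0 δr - (β * μ0 - δr)) -
        ((hybridVar φ β μ0 δr)⁻¹ - β) * μ0 + deriv φ μ0 -
        (((hybridVar φ β μ0 δr)⁻¹ - β) - iteratedDeriv 2 φ μ0) *
          (hybridMean φ β μ0 δr - μ0)| ≤
      K3 / 2 * (hybridVar φ β μ0 δr + (hybridMean φ β μ0 δr - μ0) ^ 2) := by
  have hstein :=
    integral_deriv_hybrid_eq (hφ.differentiable (by norm_num)) hprob hmean hd hbot htop
  have htaylor (x : ℝ) :
      |deriv φ x - deriv φ μ0 - iteratedDeriv 2 φ μ0 * (x - μ0)| ≤ K3 / 2 * (x - μ0) ^ 2 := by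
    rw [iteratedDeriv_succ', iteratedDeriv_one]
    refine abs_sub_sub_deriv_mul_le_of_abs_iteratedDeriv_two_le hφ.deriv' (fun y => ?_) μ0 x
    simpa only [iteratedDeriv_succ'] using hK3 y
  have hbound := abs_integral_sub_sub_mul_le hd hmean (integrable_sub_sq hmean hm2 μ0) htaylor
  rw [integral_sub_sq_eq_integral_sub_integral_sq_add hmean hm2, hstein] at hbound
  rw [← abs_neg]
  convert hbound using 2
  · unfold hybridMean
    ring
  · rfl

/-- Taylor-expansion bound for the site linear shift.  If `φ` is C³
with `|φ'''| ≤ K3`, the hybrid is a well-defined probability measure with finite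
mean `μ_h` and finite variance `v_h > 0`, `φ'` is `h`-integrable, and the
unnormalized density vanishes at `±∞`, then, with `r_site := μ_h/v_h − (β μ0 − δr)`
and `β_site := v_h⁻¹ − β`,
`|r_site − β_site μ0 + φ'(μ0) − (β_site − φ''(μ0))(μ_h − μ0)| ≤ (K3/2)(v_h + (μ_h − μ0)²)`. -/
theorem site_linear_shift_taylor_bound
    (φ : ℝ → ℝ) (K3 : ℝ) (hφ : ContDiff ℝ 3 φ)
    (hK3 : ∀ x, |iteratedDeriv 3 φ x| ≤ K3)
    (β μ0 δr : ℝ) (hβ : 0 < β)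
    (hprob : IsProbabilityMeasure (hybrid φ β μ0 δr))
    (hmean : Integrable (fun x => x) (hybrid φ β μ0 δr))
    (hm2 : Integrable (fun x => x ^ 2) (hybrid φ β μ0 δr))
    (hvar : 0 < hybridVar φ β μ0 δr)
    (hd : Integrable (fun x => deriv φ x) (hybrid φ β μ0 δr))
    (htop : Tendsto (fun x => hybridDens φ β μ0 δr x) atTop (nhds 0))
    (hbot : Tendsto (fun x => hybridDens φ β μ0 δr x) atBot (nhds 0)) :
    |(hybridMean φ β μ0 δr / hybridVar φ β μ0 δr - (β * μ0 - δr)) -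
        ((hybridVar φ β μ0 δr)⁻¹ - β) * μ0 + deriv φ μ0 -
        (((hybridVar φ β μ0 δr)⁻¹ - β) - iteratedDeriv 2 φ μ0) *
          (hybridMean φ β μ0 δr - μ0)| ≤
      K3 / 2 * (hybridVar φ β μ0 δr + (hybridMean φ β μ0 δr - μ0) ^ 2) :=
  site_linear_shift_taylor_bound_general φ K3 hφ hK3 β μ0 δr hprob hmean hm2 hd htop hbot
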